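/- Let J₁, J₂ ∈ ℂ with J₁ ≠ 0 and J₂ ≠ 0. Define the half-line SSH operator H♯ on ℓ²(ℕ, ℂ) by (H♯ψ)_0 = J₁ψ_1, (H♯ψ)_{2n+1} = conj(J₁)ψ_{2n} + J₂ψ_{2n+2}, and (H♯ψ)_{2n+2} = conj(J₂)ψ_{2n+1} + J₁ψ_{2n+3} for n ≥ 0. Then there exists a nonzero ψ ∈ ℓ²(ℕ, ℂ) with H♯ψ = 0 if and only if |J₁| < |J₂|. -/

import Mathlib

/-!
On the odd sites the equations of `H♯ψ = 0` read `conj J₁ ψ_{2n} + J₂ ψ_{2n+2} = 0`, so the even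
entries of a zero mode form a geometric sequence with ratio `-conj J₁ / J₂`; the even sites give
`J₁ ψ_1 = 0` and `conj J₂ ψ_{2n+1} + J₁ ψ_{2n+3} = 0`, so the odd entries vanish. Conversely this
sequence is a zero mode, and it is square-summable exactly when `|J₁| < |J₂|`.
-/

open scoped ComplexConjugate

noncomputable section

/-- ℓ²(ℕ, ℂ) -/
abbrev L2N : Type := lp (fun _ : ℕ => ℂ) 2

theorem memℓp_two_iff_summable_sq {α E : Type*} [NormedAddCommGroup E] {f : α → E} :
    Memℓp f 2 ↔ Summable fun k => ‖f k‖ ^ 2 := by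
  rw [memℓp_gen_iff (by norm_num)]
  norm_num

section EvenGeometric

variable {𝕜 : Type*} [NormedDivisionRing 𝕜]

def evenGeometric (r c : 𝕜) (k : ℕ) : 𝕜 :=
  if Even k then c * r ^ (k / 2) else 0

@[simp]
theorem evenGeometric_two_mul (r c : 𝕜) (n : ℕ) : evenGeometric r c (2 * n) = c * r ^ n := by
  simp [evenGeometric]

@[simp]
theorem evenGeometric_two_mul_add_one (r c : 𝕜) (n : ℕ) :
    evenGeometric r c (2 * n + 1) = 0 := by
  simp [evenGeometric]

theorem memℓp_two_evenGeometric_iff {r c : 𝕜} (hc : c ≠ 0) :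
    Memℓp (evenGeometric r c) 2 ↔ ‖r‖ < 1 := by
  have hvanish : ∀ k ∉ Set.range (2 * · : ℕ → ℕ), ‖evenGeometric r c k‖ ^ 2 = 0 := by
    intro k hk
    have hodd : ¬Even k := fun ⟨n, hn⟩ => hk ⟨n, by simp only; omega⟩
    simp [evenGeometric, hodd]
  have heven (n : ℕ) : ‖evenGeometric r c (2 * n)‖ ^ 2 = ‖c‖ ^ 2 * (‖r‖ ^ 2) ^ n := by
    rw [evenGeometric_two_mul, norm_mul, norm_pow]
    ring
  rw [memℓp_two_iff_summable_sq,
    ← (mul_right_injective₀ two_ne_zero).summable_iff hvanish, Function.comp_def]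
  simp only [heven]
  rw [summable_mul_left_iff (by positivity), summable_geometric_iff_norm_lt_one, norm_pow,
    norm_norm, sq_lt_one_iff₀ (norm_nonneg r)]

end EvenGeometric

theorem eq_zero_iff_zero_odd_even {M : Type*} [Zero M] (f : ℕ → M) :
    f = 0 ↔ f 0 = 0 ∧ (∀ n, f (2 * n + 1) = 0) ∧ ∀ n, f (2 * n + 2) = 0 := by
  refine ⟨fun h => by simp [h], fun ⟨h0, hodd, heven⟩ => funext fun k => ?_⟩
  obtain ⟨n, rfl | rfl⟩ := Nat.even_or_odd' k
  · cases n with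
    | zero => exact h0
    | succ n => exact heven n
  · exact hodd n

def sshRatio (J₁ J₂ : ℂ) : ℂ := -(conj J₁ / J₂)

theorem norm_sshRatio_lt_one_iff {J₁ J₂ : ℂ} (hJ₂ : J₂ ≠ 0) :
    ‖sshRatio J₁ J₂‖ < 1 ↔ ‖J₁‖ < ‖J₂‖ := by
  rw [sshRatio, norm_neg, norm_div, Complex.norm_conj, div_lt_one (norm_pos_iff.mpr hJ₂)]

theorem mul_sshRatio (J₁ : ℂ) {J₂ : ℂ} (hJ₂ : J₂ ≠ 0) : J₂ * sshRatio J₁ J₂ = -conj J₁ := by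
  rw [sshRatio]
  field_simp

def IsSSHZeroMode (J₁ J₂ : ℂ) (ψ : ℕ → ℂ) : Prop :=
  J₁ * ψ 1 = 0 ∧ (∀ n, conj J₁ * ψ (2 * n) + J₂ * ψ (2 * n + 2) = 0) ∧
    ∀ n, conj J₂ * ψ (2 * n + 1) + J₁ * ψ (2 * n + 3) = 0

theorem isSSHZeroMode_iff {J₁ J₂ : ℂ} (hJ₁ : J₁ ≠ 0) (hJ₂ : J₂ ≠ 0) {ψ : ℕ → ℂ} :
    IsSSHZeroMode J₁ J₂ ψ ↔ ψ = evenGeometric (sshRatio J₁ J₂) (ψ 0) := by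
  constructor
  · rintro ⟨h0, hodd, heven⟩
    have hodd_zero (n : ℕ) : ψ (2 * n + 1) = 0 := by
      induction n with
      | zero => exact (mul_eq_zero.mp h0).resolve_left hJ₁
      | succ n ih =>
        have := heven n
        rw [ih, mul_zero, zero_add] at this
        exact (mul_eq_zero.mp this).resolve_left hJ₁
    have heven_geom (n : ℕ) : ψ (2 * n) = ψ 0 * sshRatio J₁ J₂ ^ n := by
      induction n with
      | zero => simp
      | succ n ih =>
        apply mul_left_cancel₀ hJ₂
        rw [mul_add_one, pow_succ]
        linear_combination hodd n - ψ 0 * sshRatio J₁ J₂ ^ n * mul_sshRatio J₁ hJ₂ - conj J₁ * ih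
    funext k
    obtain ⟨n, rfl | rfl⟩ := Nat.even_or_odd' k
    · rw [heven_geom, evenGeometric_two_mul]
    · rw [hodd_zero, evenGeometric_two_mul_add_one]
  · intro h
    rw [h]
    refine ⟨?_, fun n => ?_, fun n => ?_⟩
    · simp [evenGeometric]
    · rw [show 2 * n + 2 = 2 * (n + 1) by ring, evenGeometric_two_mul, evenGeometric_two_mul,
        pow_succ]
      linear_combination ψ 0 * sshRatio J₁ J₂ ^ n * mul_sshRatio J₁ hJ₂
    · rw [show 2 * n + 3 = 2 * (n + 1) + 1 by ring, evenGeometric_two_mul_add_one,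
        evenGeometric_two_mul_add_one]
      ring

/-- the half-line SSH operator with alternating hoppings J₁, J₂ has a
nonzero square-summable zero mode if and only if |J₁| < |J₂|. -/
theorem statement8 (J₁ J₂ : ℂ) (hJ₁ : J₁ ≠ 0) (hJ₂ : J₂ ≠ 0)
    (H : L2N →L[ℂ] L2N)
    (h0 : ∀ ψ : L2N, H ψ 0 = J₁ * ψ 1)
    (hodd : ∀ (ψ : L2N) (n : ℕ),
      H ψ (2 * n + 1) = conj J₁ * ψ (2 * n) + J₂ * ψ (2 * n + 2))
    (heven : ∀ (ψ : L2N) (n : ℕ),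
      H ψ (2 * n + 2) = conj J₂ * ψ (2 * n + 1) + J₁ * ψ (2 * n + 3)) :
    (∃ ψ : L2N, ψ ≠ 0 ∧ H ψ = 0) ↔ ‖J₁‖ < ‖J₂‖ := by
  have hzero (ψ : L2N) : H ψ = 0 ↔ ⇑ψ = evenGeometric (sshRatio J₁ J₂) (ψ 0) := by
    rw [lp.eq_zero_iff_coeFn_eq_zero, eq_zero_iff_zero_odd_even, h0, ← isSSHZeroMode_iff hJ₁ hJ₂]
    simp only [hodd, heven, IsSSHZeroMode]
  rw [← norm_sshRatio_lt_one_iff hJ₂]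
  constructor
  · rintro ⟨ψ, hψ, hHψ⟩
    have hψ_eq := (hzero ψ).1 hHψ
    have hψ0 : ψ 0 ≠ 0 := fun h => hψ <| lp.ext <| by
      ext k
      simp [hψ_eq, h, evenGeometric]
    exact (memℓp_two_evenGeometric_iff hψ0).1 (hψ_eq ▸ ψ.2)
  · intro hr
    let ψ : L2N :=
      ⟨evenGeometric (sshRatio J₁ J₂) 1, (memℓp_two_evenGeometric_iff one_ne_zero).2 hr⟩
    have hψ0 : ψ 0 = 1 := by simp [ψ, evenGeometric]
    refine ⟨ψ, fun h => ?_, (hzero ψ).2 (by rw [hψ0])⟩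
    simp [h] at hψ0
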